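/- arXiv:0905.3724 — 2 statements merged into one kernel-verified Lean document; each statement's English description precedes it below -/
import Mathlib

section
/- For every z∈ℂ with Im z ≠ 0 there exists a sequence u:ℤ→ℂ, not identically zero, satisfying a_{n−1}u_{n−1} + b_n u_n + a_n u_{n+1} = z u_n for all n∈ℤ and Σ_{n≥0}|u_n|² < ∞. Any two such sequences are scalar multiples of one another, and every such nonzero sequence satisfies u_n ≠ 0 for all n∈ℤ; in particular there is a unique such sequence normalized by u_0 = 1. The analogous existence, uniqueness up to scalars, and nonvanishing statements hold with the condition Σ_{n≤0}|u_n|² < ∞. -/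
open MeasureTheory Filter Topology Complex
open scoped ComplexConjugate ENNReal

noncomputable section

local notation "ℓ²ℤ" => lp (fun _ : ℤ => ℂ) 2
local notation "ℓ²ℕ" => lp (fun _ : ℕ => ℂ) 2
local notation "⟪" x ", " y "⟫" => @inner ℂ _ _ x y

/-- The standard basis vector `δ_n` of `ℓ²(ℤ)`. -/
def delta (n : ℤ) : ℓ²ℤ := lp.single 2 n 1

/-- The standard basis vector indexed by `k` of the half-line space `ℓ²(ℕ)`. -/
def deltaN (k : ℕ) : ℓ²ℕ := lp.single 2 k 1

/-- `u` solves the difference equation `a_{n-1}u_{n-1} + b_n u_n + a_n u_{n+1} = z u_n`. -/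
def IsSolution (a b : ℤ → ℝ) (z : ℂ) (u : ℤ → ℂ) : Prop :=
  ∀ n : ℤ, (a (n - 1) : ℂ) * u (n - 1) + (b n : ℂ) * u n + (a n : ℂ) * u (n + 1) = z * u n

/-- `Σ_{n ≥ 0} |u_n|² < ∞`. -/
def L2AtPlus (u : ℤ → ℂ) : Prop := Summable fun k : ℕ => ‖u (k : ℤ)‖ ^ 2

/-- `Σ_{n ≤ 0} |u_n|² < ∞`. -/
def L2AtMinus (u : ℤ → ℂ) : Prop := Summable fun k : ℕ => ‖u (-(k : ℤ))‖ ^ 2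

/-- `up z` is the Weyl solution `u^+(z)`, `ℓ²` at `+∞`, normalized by `u_0 = 1`. -/
def IsWeylPlus (a b : ℤ → ℝ) (up : ℂ → ℤ → ℂ) : Prop :=
  ∀ z : ℂ, 0 < z.im → IsSolution a b z (up z) ∧ L2AtPlus (up z) ∧ up z 0 = 1

/-- `um z` is the Weyl solution `u^-(z)`, `ℓ²` at `-∞`, normalized by `u_0 = 1`. -/
def IsWeylMinus (a b : ℤ → ℝ) (um : ℂ → ℤ → ℂ) : Prop :=
  ∀ z : ℂ, 0 < z.im → IsSolution a b z (um z) ∧ L2AtMinus (um z) ∧ um z 0 = 1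

/-- The Wronskian `W(z) = a_0 (u_1^+ u_0^- - u_1^- u_0^+)`. -/
def Wfun (a : ℤ → ℝ) (up um : ℂ → ℤ → ℂ) (z : ℂ) : ℂ :=
  (a 0 : ℂ) * (up z 1 * um z 0 - um z 1 * up z 0)

/-!
The Jacobi matrix `J` is a bounded self-adjoint operator on `ℓ²(ℤ)`, so for `Im z ≠ 0` the vector
`ψ = (z - J)⁻¹ δ₀` exists. It solves the difference equation away from `n = 0`, and
`Im ⟪ψ, (z - J) ψ⟫ = Im z ‖ψ‖²` forces `ψ₀ ≠ 0`. Continuing `ψ|_{n ≥ 0}` backwards by the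
recursion (possible since `a_n ≠ 0`) gives a nonzero solution that is `ℓ²` at `+∞`.

For any such solution `u`, Green's identity says that `Im z · Im (a_n ū_n u_{n+1})` is
nondecreasing in `n`, and it tends to `0` at `+∞`. If `u_m = 0` it vanishes at `m - 1`, hence on
all of `[m - 1, ∞)`, which forces `u_{m+1} = 0` and so `u = 0`. Since the solutions that are `ℓ²`
at `+∞` vanish nowhere unless they are zero, they form a line: `v - (v₀ / u₀) u` vanishes at `0`.
The statements at `-∞` follow by the reflection `n ↦ -n`.
-/

open scoped NNReal

section WeightedShift

variable {ι : Type*}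

def lpReindex (e : ι ≃ ι) : lp (fun _ : ι => ℂ) 2 →L[ℂ] lp (fun _ : ι => ℂ) 2 :=
  LinearMap.mkContinuous
    { toFun := fun f => ⟨fun i => f (e i), memℓp_gen <|
        e.summable_iff.2 <| (lp.memℓp f).summable (p := 2) (by norm_num)⟩
      map_add' := fun _ _ => rfl
      map_smul' := fun _ _ => rfl }
    1 fun f => by
      rw [one_mul, lp.norm_eq_tsum_rpow (p := 2) (by norm_num),
        lp.norm_eq_tsum_rpow (p := 2) (by norm_num)]
      exact (congrArg (· ^ _) (e.tsum_eq fun i => ‖f i‖ ^ (2 : ℝ≥0∞).toReal)).le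

def weightedShift (c : ι → ℂ) {C : ℝ≥0} (hc : ∀ i, ‖c i‖ ≤ C) (e : ι ≃ ι) :
    lp (fun _ : ι => ℂ) 2 →L[ℂ] lp (fun _ : ι => ℂ) 2 :=
  lp.mapCLM 2 (fun i => ContinuousLinearMap.mul ℂ ℂ (c i)) C.coe_nonneg
    (fun i => (ContinuousLinearMap.opNorm_mul_apply_le ℂ ℂ (c i)).trans (hc i)) ∘L lpReindex e

lemma weightedShift_apply (c : ι → ℂ) {C : ℝ≥0} (hc : ∀ i, ‖c i‖ ≤ C) (e : ι ≃ ι)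
    (f : lp (fun _ : ι => ℂ) 2) (i : ι) : weightedShift c hc e f i = c i * f (e i) := rfl

lemma inner_weightedShift_left (c c' : ι → ℂ) {C C' : ℝ≥0} (hc : ∀ i, ‖c i‖ ≤ C)
    (hc' : ∀ i, ‖c' i‖ ≤ C') (e : ι ≃ ι) (h : ∀ i, c' (e i) = conj (c i))
    (f g : lp (fun _ : ι => ℂ) 2) :
    ⟪weightedShift c hc e f, g⟫ = ⟪f, weightedShift c' hc' e.symm g⟫ := by
  rw [lp.inner_eq_tsum, lp.inner_eq_tsum, ← e.tsum_eq (fun i => ⟪f i, _⟫)]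
  refine tsum_congr fun i => ?_
  simp only [weightedShift_apply, RCLike.inner_apply, map_mul, h, Equiv.symm_apply_apply]
  ring

lemma adjoint_weightedShift (c c' : ι → ℂ) {C C' : ℝ≥0} (hc : ∀ i, ‖c i‖ ≤ C)
    (hc' : ∀ i, ‖c' i‖ ≤ C') (e : ι ≃ ι) (h : ∀ i, c' (e i) = conj (c i)) :
    ContinuousLinearMap.adjoint (weightedShift c hc e) = weightedShift c' hc' e.symm := by
  rw [(ContinuousLinearMap.eq_adjoint_iff _ _).2 (inner_weightedShift_left c c' hc hc' e h),
    ContinuousLinearMap.adjoint_adjoint]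

end WeightedShift

lemma IsSelfAdjoint.exists_smul_sub_apply_eq_and_inner_ne_zero {H : Type*}
    [NormedAddCommGroup H] [InnerProductSpace ℂ H] [CompleteSpace H] {T : H →L[ℂ] H}
    (hT : IsSelfAdjoint T) {z : ℂ} (hz : z.im ≠ 0) {v : H} (hv : v ≠ 0) :
    ∃ ψ : H, z • ψ - T ψ = v ∧ ⟪ψ, v⟫ ≠ 0 := by
  have hunit : IsUnit (algebraMap ℂ (H →L[ℂ] H) z - T) :=
    spectrum.notMem_iff.mp fun hmem => hz (hT.im_eq_zero_of_mem_spectrum hmem)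
  obtain ⟨ψ, hψ⟩ := (ContinuousLinearMap.isUnit_iff_bijective.mp hunit).surjective v
  replace hψ : z • ψ - T ψ = v := by simpa [Algebra.algebraMap_eq_smul_one] using hψ
  refine ⟨ψ, hψ, fun hzero => hv ?_⟩
  have him : z.im * ‖ψ‖ ^ 2 = 0 := by
    have hreal : (⟪ψ, T ψ⟫).im = 0 := hT.isSymmetric.im_inner_self_apply ψ
    have hself : ⟪ψ, ψ⟫ = ((‖ψ‖ ^ 2 : ℝ) : ℂ) := by
      rw [inner_self_eq_norm_sq_to_K]; norm_cast
    have := congrArg Complex.im (congrArg (⟪ψ, ·⟫) hψ)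
    simp only [inner_sub_right, inner_smul_right, hself, hzero, Complex.sub_im, Complex.mul_im,
      Complex.ofReal_re, Complex.ofReal_im, hreal, Complex.zero_im] at this
    linarith
  have : ψ = 0 := by simpa [hz] using him
  rw [← hψ, this, smul_zero, map_zero, sub_zero]

lemma line_of_eq_zero_of_apply_eq_zero {K : Type*} [Field K] {W : Submodule K (ℤ → K)}
    (hex : ∃ u, u ≠ 0 ∧ u ∈ W) (hzero : ∀ u ∈ W, ∀ n, u n = 0 → u = 0) :
    (∀ u v, u ≠ 0 → u ∈ W → v ≠ 0 → v ∈ W → ∃ c : K, v = fun n => c * u n) ∧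
    (∀ u, u ≠ 0 → u ∈ W → ∀ n, u n ≠ 0) ∧
    (∃! u, u ∈ W ∧ u 0 = 1) := by
  have eq_of_apply_zero_eq {u v} (hu : u ∈ W) (hv : v ∈ W) (h : u 0 = v 0) : u = v :=
    sub_eq_zero.mp <| hzero _ (W.sub_mem hu hv) 0 (by simp [h])
  have ne_zero {u} (hu : u ∈ W) (hu₀ : u ≠ 0) : u 0 ≠ 0 := fun h => hu₀ (hzero u hu 0 h)
  refine ⟨fun u v hu₀ hu _ hv => ⟨v 0 / u 0, ?_⟩, fun u hu₀ hu n h => hu₀ (hzero u hu n h), ?_⟩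
  · exact eq_of_apply_zero_eq hv (W.smul_mem (v 0 / u 0) hu) (by simp [ne_zero hu hu₀])
  · obtain ⟨u, hu₀, hu⟩ := hex
    refine ⟨(u 0)⁻¹ • u, ⟨W.smul_mem _ hu, by simp [ne_zero hu hu₀]⟩, fun v ⟨hv, hv₀⟩ => ?_⟩
    exact eq_of_apply_zero_eq hv (W.smul_mem _ hu) (by simp [hv₀, ne_zero hu hu₀])

lemma exists_jacobiOperator (a b : ℤ → ℝ) {C : ℝ≥0} (ha : ∀ n, |a n| ≤ C)
    (hb : ∀ n, |b n| ≤ C) :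
    ∃ J : ℓ²ℤ →L[ℂ] ℓ²ℤ, IsSelfAdjoint J ∧
      ∀ f n, J f n = a (n - 1) * f (n - 1) + b n * f n + a n * f (n + 1) := by
  have norm_le (c : ℤ → ℝ) (hc : ∀ n, |c n| ≤ C) (n : ℤ) : ‖(c n : ℂ)‖ ≤ C := by
    simpa using hc n
  set A := weightedShift (fun n => (a n : ℂ)) (norm_le a ha) (Equiv.addRight 1)
  set B := weightedShift (fun n => (b n : ℂ)) (norm_le b hb) (Equiv.refl ℤ)
  have hA : star A = weightedShift (fun n => (a (n - 1) : ℂ)) (norm_le _ fun n => ha (n - 1))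
      (Equiv.addRight 1).symm :=
    adjoint_weightedShift _ _ _ _ _ fun n => by simp
  have hB : IsSelfAdjoint B := adjoint_weightedShift _ _ _ _ _ fun n => by simp
  refine ⟨A + star A + B, (IsSelfAdjoint.add_star_self A).add hB, fun f n => ?_⟩
  simp only [add_apply, lp.coeFn_add, Pi.add_apply, hA, A, B, weightedShift_apply,
    Equiv.coe_addRight, Equiv.addRight_symm_apply, Equiv.refl_apply]
  rw [← sub_eq_add_neg]
  ring

section Solutions

variable {a b : ℤ → ℝ} {z : ℂ} {u : ℤ → ℂ}

lemma IsSolution.eq_zero_of_apply_eq_zero_of_apply_add_one_eq_zero (ha : ∀ n, a n ≠ 0)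
    (hu : IsSolution a b z u) {m : ℤ} (h₀ : u m = 0) (h₁ : u (m + 1) = 0) : u = 0 := by
  have ha' (n : ℤ) : (a n : ℂ) ≠ 0 := Complex.ofReal_ne_zero.mpr (ha n)
  suffices ∀ n, u n = 0 ∧ u (n + 1) = 0 from funext fun n => (this n).1
  intro n
  induction n using Int.inductionOn' (b := m) with
  | zero => exact ⟨h₀, h₁⟩
  | succ k _ ih =>
    refine ⟨ih.2, ?_⟩
    have := hu (k + 1)
    rw [add_sub_cancel_right, ih.1, ih.2] at this
    simpa [ha'] using this
  | pred k _ ih =>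
    refine ⟨?_, by rw [sub_add_cancel]; exact ih.1⟩
    have := hu k
    rw [ih.1, ih.2] at this
    simpa [ha'] using this

lemma L2AtPlus.tendsto_atTop_zero (hu : L2AtPlus u) : Tendsto u atTop (𝓝 0) := by
  rw [← Nat.map_cast_int_atTop, tendsto_map'_iff, tendsto_zero_iff_norm_tendsto_zero]
  simpa [Function.comp_def, Real.sqrt_sq (norm_nonneg _)] using
    (Real.continuous_sqrt.tendsto 0).comp (Summable.tendsto_atTop_zero hu)

def flux (a : ℤ → ℝ) (u : ℤ → ℂ) (n : ℤ) : ℝ := (a n * conj (u n) * u (n + 1)).im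

lemma IsSolution.flux_sub_flux_sub_one (hu : IsSolution a b z u) (n : ℤ) :
    flux a u n - flux a u (n - 1) = z.im * ‖u n‖ ^ 2 := by
  have h := congrArg (fun w => (conj (u n) * w).im) (hu n)
  simp only [flux, sub_add_cancel, Complex.sq_norm, Complex.normSq_apply]
  simp only [mul_add, Complex.add_im, Complex.mul_im, Complex.mul_re, Complex.conj_re,
    Complex.conj_im, Complex.ofReal_re, Complex.ofReal_im] at h ⊢
  linear_combination h

lemma tendsto_flux {C : ℝ} (hC : ∀ n, |a n| ≤ C) (hu : L2AtPlus u) :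
    Tendsto (flux a u) atTop (𝓝 0) := by
  have hu₀ := (hu.tendsto_atTop_zero).norm
  have hprod : Tendsto (fun n => ‖u n‖ * ‖u (n + 1)‖) atTop (𝓝 0) := by
    simpa using hu₀.mul (hu₀.comp (tendsto_atTop_add_const_right _ 1 tendsto_id))
  refine squeeze_zero_norm (fun n => ?_) (by simpa using hprod.const_mul C)
  calc ‖flux a u n‖ ≤ ‖(a n : ℂ) * conj (u n) * u (n + 1)‖ := Complex.abs_im_le_norm _
    _ ≤ C * (‖u n‖ * ‖u (n + 1)‖) := by
        simp only [norm_mul, Complex.norm_real, Complex.norm_conj, Real.norm_eq_abs, mul_assoc]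
        gcongr
        exact hC n

lemma IsSolution.eq_zero_of_l2AtPlus_of_apply_eq_zero (ha : ∀ n, a n ≠ 0) {C : ℝ}
    (hC : ∀ n, |a n| ≤ C) (hz : z.im ≠ 0) (hu : IsSolution a b z u) (hu₂ : L2AtPlus u) {m : ℤ}
    (hm : u m = 0) : u = 0 := by
  set G : ℤ → ℝ := fun n => z.im * flux a u n
  have hG (n : ℤ) : G n - G (n - 1) = z.im ^ 2 * ‖u n‖ ^ 2 := by
    simp only [G, ← mul_sub, hu.flux_sub_flux_sub_one]; ring
  have hG_mono : Monotone G := monotone_int_of_le_succ fun n => by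
    have := hG (n + 1)
    rw [add_sub_cancel_right] at this
    linarith [show 0 ≤ z.im ^ 2 * ‖u (n + 1)‖ ^ 2 by positivity]
  have hG_nonpos (n : ℤ) : G n ≤ 0 :=
    hG_mono.ge_of_tendsto (by simpa using (tendsto_flux hC hu₂).const_mul z.im) n
  have hG_pred : G (m - 1) = 0 := by simp [G, flux, hm]
  have hG_m : G m = 0 := le_antisymm (hG_nonpos m) (hG_pred ▸ hG_mono (by omega))
  have hG_succ : G (m + 1) = 0 := le_antisymm (hG_nonpos _) (hG_m ▸ hG_mono (by omega))
  have := hG (m + 1)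
  rw [add_sub_cancel_right, hG_succ, hG_m, sub_zero] at this
  have h₁ : u (m + 1) = 0 := by simpa [hz] using this.symm
  exact hu.eq_zero_of_apply_eq_zero_of_apply_add_one_eq_zero ha hm h₁

/-- `backwardExtension a b z ψ k` is the value at `1 - k` of the solution that agrees with `ψ`
at `0` and `1`. -/
def backwardExtension (a b : ℤ → ℝ) (z : ℂ) (ψ : ℤ → ℂ) : ℕ → ℂ
  | 0 => ψ 1
  | 1 => ψ 0
  | k + 2 => ((z - b (-k)) * backwardExtension a b z ψ (k + 1)
      - a (-k) * backwardExtension a b z ψ k) / a (-k - 1)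

lemma exists_isSolution_eqOn_nonneg (ha : ∀ n, a n ≠ 0) {ψ : ℤ → ℂ}
    (hψ : ∀ n, 1 ≤ n → a (n - 1) * ψ (n - 1) + b n * ψ n + a n * ψ (n + 1) = z * ψ n) :
    ∃ u, IsSolution a b z u ∧ ∀ n, 0 ≤ n → u n = ψ n := by
  set w := backwardExtension a b z ψ
  set u : ℤ → ℂ := fun n => if 0 ≤ n then ψ n else w (1 - n).toNat
  have hw : ∀ k : ℕ, u (1 - k) = w k
    | 0 => by simp [u, w, backwardExtension]
    | 1 => by simp [u, w, backwardExtension]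
    | k + 2 => by
      simp only [u, show ¬ (0 : ℤ) ≤ 1 - ↑(k + 2) by omega, if_false]
      congr; omega
  have hu : ∀ n, 0 ≤ n → u n = ψ n := fun n hn => if_pos hn
  refine ⟨u, fun n => ?_, hu⟩
  rcases le_or_gt 1 n with hn | hn
  · rw [hu n (by omega), hu (n - 1) (by omega), hu (n + 1) (by omega)]
    exact hψ n hn
  · obtain ⟨k, rfl⟩ : ∃ k : ℕ, n = -k := ⟨(-n).toNat, by omega⟩
    have h₁ : u (-k - 1) = w (k + 2) := by rw [← hw]; congr 1; push_cast; ring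
    have h₂ : u (-k) = w (k + 1) := by rw [← hw]; congr 1; push_cast; ring
    have h₃ : u (-k + 1) = w k := by rw [← hw]; congr 1; ring
    have : (a (-k - 1) : ℂ) ≠ 0 := Complex.ofReal_ne_zero.mpr (ha _)
    rw [h₁, h₂, h₃]
    simp only [w, backwardExtension]
    field_simp
    ring

lemma exists_ne_zero_isSolution_l2AtPlus (ha : ∀ n, a n ≠ 0) {C : ℝ≥0}
    (haC : ∀ n, |a n| ≤ C) (hbC : ∀ n, |b n| ≤ C) (hz : z.im ≠ 0) :
    ∃ u : ℤ → ℂ, u ≠ 0 ∧ IsSolution a b z u ∧ L2AtPlus u := by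
  obtain ⟨J, hJ, hJ_apply⟩ := exists_jacobiOperator a b haC hbC
  have hδ : delta 0 ≠ 0 := fun h => by
    simpa [delta] using congrArg (fun f : ℓ²ℤ => f 0) h
  obtain ⟨ψ, hψ, hψ₀⟩ := hJ.exists_smul_sub_apply_eq_and_inner_ne_zero hz hδ
  have hψ_sol (n : ℤ) (hn : 1 ≤ n) :
      a (n - 1) * ψ (n - 1) + b n * ψ n + a n * ψ (n + 1) = z * ψ n := by
    have := congrArg (fun f : ℓ²ℤ => f n) hψ
    simp only [lp.coeFn_sub, lp.coeFn_smul, Pi.sub_apply, Pi.smul_apply, smul_eq_mul,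
      hJ_apply, delta, lp.single_apply_ne 2 0 _ (show n ≠ 0 by omega)] at this
    linear_combination -this
  obtain ⟨u, hu, huψ⟩ := exists_isSolution_eqOn_nonneg ha hψ_sol
  refine ⟨u, fun h => hψ₀ ?_, hu, ?_⟩
  · rw [delta, lp.inner_single_right, ← huψ 0 le_rfl, h]
    simp
  · have : Summable fun k : ℕ => ‖ψ k‖ ^ 2 :=
      ((lp.memℓp ψ).summable (p := 2) (by norm_num)).comp_injective Nat.cast_injective |>.congr
        fun k => by simp
    exact this.congr fun k => by rw [huψ k k.cast_nonneg]

lemma IsSolution.reflect (hu : IsSolution a b z u) :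
    IsSolution (fun n => a (-n - 1)) (fun n => b (-n)) z (fun n => u (-n)) := fun n => by
  have := hu (-n)
  beta_reduce
  rw [show -(n - 1) - 1 = -n by ring, show -(n - 1) = -n + 1 by ring,
    show -(n + 1) = -n - 1 by ring]
  linear_combination this

lemma isSolution_reflect_iff :
    IsSolution (fun n => a (-n - 1)) (fun n => b (-n)) z (fun n => u (-n)) ↔
      IsSolution a b z u :=
  ⟨fun h => by simpa using h.reflect, IsSolution.reflect⟩

lemma reflect_ne_zero (hu : u ≠ 0) : (fun n => u (-n)) ≠ 0 :=
  fun h => hu <| funext fun n => by simpa using congrFun h (-n)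

lemma exists_ne_zero_isSolution_l2AtMinus (ha : ∀ n, a n ≠ 0) {C : ℝ≥0}
    (haC : ∀ n, |a n| ≤ C) (hbC : ∀ n, |b n| ≤ C) (hz : z.im ≠ 0) :
    ∃ u : ℤ → ℂ, u ≠ 0 ∧ IsSolution a b z u ∧ L2AtMinus u := by
  obtain ⟨u, hu₀, hu, hu₂⟩ := exists_ne_zero_isSolution_l2AtPlus (a := fun n => a (-n - 1))
    (b := fun n => b (-n)) (fun _ => ha _) (fun _ => haC _) (fun _ => hbC _) hz
  exact ⟨fun n => u (-n), reflect_ne_zero hu₀, isSolution_reflect_iff.1 (by simpa using hu),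
    by simpa [L2AtMinus, L2AtPlus] using hu₂⟩

lemma IsSolution.eq_zero_of_l2AtMinus_of_apply_eq_zero (ha : ∀ n, a n ≠ 0) {C : ℝ}
    (hC : ∀ n, |a n| ≤ C) (hz : z.im ≠ 0) (hu : IsSolution a b z u) (hu₂ : L2AtMinus u) {m : ℤ}
    (hm : u m = 0) : u = 0 := by
  by_contra hu₀
  exact reflect_ne_zero hu₀ <| hu.reflect.eq_zero_of_l2AtPlus_of_apply_eq_zero (fun _ => ha _)
    (fun _ => hC _) hz hu₂ (m := -m) (by simpa using hm)

def solutionSubmodule (a b : ℤ → ℝ) (z : ℂ) : Submodule ℂ (ℤ → ℂ) where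
  carrier := {u | IsSolution a b z u}
  add_mem' {u v} hu hv n := by
    simp only [Pi.add_apply]; linear_combination hu n + hv n
  zero_mem' n := by simp
  smul_mem' c u hu n := by
    simp only [Pi.smul_apply, smul_eq_mul]; linear_combination c * hu n

@[simp]
lemma mem_solutionSubmodule :
    u ∈ solutionSubmodule a b z ↔ IsSolution a b z u :=
  Iff.rfl

lemma l2AtPlus_iff_memℓp : L2AtPlus u ↔ Memℓp (fun k : ℕ => u k) 2 := by
  rw [memℓp_gen_iff (by norm_num)]
  simp [L2AtPlus]

def l2AtPlusSubmodule : Submodule ℂ (ℤ → ℂ) where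
  carrier := {u | L2AtPlus u}
  add_mem' hu hv :=
    l2AtPlus_iff_memℓp.2 <| (l2AtPlus_iff_memℓp.1 hu).add (l2AtPlus_iff_memℓp.1 hv)
  zero_mem' := l2AtPlus_iff_memℓp.2 zero_memℓp
  smul_mem' c _ hu := l2AtPlus_iff_memℓp.2 <| (l2AtPlus_iff_memℓp.1 hu).const_smul c

@[simp]
lemma mem_l2AtPlusSubmodule : u ∈ l2AtPlusSubmodule ↔ L2AtPlus u :=
  Iff.rfl

def l2AtMinusSubmodule : Submodule ℂ (ℤ → ℂ) :=
  l2AtPlusSubmodule.comap (LinearMap.funLeft ℂ ℂ Neg.neg)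

@[simp]
lemma mem_l2AtMinusSubmodule : u ∈ l2AtMinusSubmodule ↔ L2AtMinus u :=
  Iff.rfl

end Solutions

/-- Existence, uniqueness up to scalars, and nonvanishing of Weyl solutions at `±∞`. -/
theorem stmt7
    (a b : ℤ → ℝ) (ha : ∀ n, 0 < a n) (hab : ∃ C : ℝ, ∀ n, a n + |b n| ≤ C) :
    ∀ z : ℂ, z.im ≠ 0 →
      -- existence of a nonzero solution which is `ℓ²` at `+∞`
      ((∃ u : ℤ → ℂ, u ≠ 0 ∧ IsSolution a b z u ∧ L2AtPlus u) ∧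
      -- uniqueness up to scalar multiples
      (∀ u v : ℤ → ℂ, u ≠ 0 → IsSolution a b z u → L2AtPlus u →
        v ≠ 0 → IsSolution a b z v → L2AtPlus v → ∃ c : ℂ, v = fun n => c * u n) ∧
      -- nonvanishing
      (∀ u : ℤ → ℂ, u ≠ 0 → IsSolution a b z u → L2AtPlus u → ∀ n : ℤ, u n ≠ 0) ∧
      -- unique normalized solution
      (∃! u : ℤ → ℂ, IsSolution a b z u ∧ L2AtPlus u ∧ u 0 = 1)) ∧
      -- and the analogues at `-∞`
      ((∃ u : ℤ → ℂ, u ≠ 0 ∧ IsSolution a b z u ∧ L2AtMinus u) ∧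
      (∀ u v : ℤ → ℂ, u ≠ 0 → IsSolution a b z u → L2AtMinus u →
        v ≠ 0 → IsSolution a b z v → L2AtMinus v → ∃ c : ℂ, v = fun n => c * u n) ∧
      (∀ u : ℤ → ℂ, u ≠ 0 → IsSolution a b z u → L2AtMinus u → ∀ n : ℤ, u n ≠ 0) ∧
      (∃! u : ℤ → ℂ, IsSolution a b z u ∧ L2AtMinus u ∧ u 0 = 1)) := by
  intro z hz
  obtain ⟨C, hC⟩ := hab
  have ha₀ (n : ℤ) : a n ≠ 0 := (ha n).ne'
  have haC (n : ℤ) : |a n| ≤ C := by rw [abs_of_pos (ha n)]; linarith [hC n, abs_nonneg (b n)]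
  have hbC (n : ℤ) : |b n| ≤ C := by linarith [hC n, ha n]
  lift C to ℝ≥0 using (abs_nonneg _).trans (haC 0)
  have hexPlus := exists_ne_zero_isSolution_l2AtPlus ha₀ haC hbC hz
  have hexMinus := exists_ne_zero_isSolution_l2AtMinus ha₀ haC hbC hz
  have hplus := line_of_eq_zero_of_apply_eq_zero
    (W := solutionSubmodule a b z ⊓ l2AtPlusSubmodule) hexPlus
    fun u hu _ hn => hu.1.eq_zero_of_l2AtPlus_of_apply_eq_zero ha₀ haC hz hu.2 hn
  have hminus := line_of_eq_zero_of_apply_eq_zero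
    (W := solutionSubmodule a b z ⊓ l2AtMinusSubmodule) hexMinus
    fun u hu _ hn => hu.1.eq_zero_of_l2AtMinus_of_apply_eq_zero ha₀ haC hz hu.2 hn
  simp only [Submodule.mem_inf, mem_solutionSubmodule, mem_l2AtPlusSubmodule,
    mem_l2AtMinusSubmodule, and_imp, and_assoc] at hplus hminus
  exact ⟨⟨hexPlus, hplus⟩, ⟨hexMinus, hminus⟩⟩
end
end

section
/- For the whole-line CMV matrix 𝒞 and any n∈ℤ: if n is even, then [𝒞, χ_n^+] = −ρ_n ( ρ_{n−1} |δ_n⟩⟨δ_{n−2}| + conj(α_{n−1}) |δ_n⟩⟨δ_{n−1}| + α_{n+1} |δ_{n−1}⟩⟨δ_n| − ρ_{n+1} |δ_{n−1}⟩⟨δ_{n+1}| ), while if n is odd, then [𝒞, χ_n^+] = ρ_n ( ρ_{n−1} |δ_{n−2}⟩⟨δ_n| + conj(α_{n−1}) |δ_{n−1}⟩⟨δ_n| + α_{n+1} |δ_n⟩⟨δ_{n−1}| − ρ_{n+1} |δ_{n+1}⟩⟨δ_{n−1}| ). In particular, [𝒞, χ_n^+] has rank at most 4. -/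
open MeasureTheory Filter Topology Complex
open scoped ComplexConjugate ENNReal

noncomputable section

local notation "ℓ²ℤ" => lp (fun _ : ℤ => ℂ) 2
local notation "ℓ²ℕ" => lp (fun _ : ℕ => ℂ) 2
local notation "⟪" x ", " y "⟫" => @inner ℂ _ _ x y

/-- `ρ_n = (1 - |α_n|²)^{1/2}`. -/
def rho (α : ℤ → ℂ) (n : ℤ) : ℝ := Real.sqrt (1 - ‖α n‖ ^ 2)

/-- `L = ⊕_{n} Θ_{2n}(α_{2n})`, where `Θ_j(α)` acts on the coordinates `j-1, j`. -/
def IsLOp (α : ℤ → ℂ) (L : ℓ²ℤ →L[ℂ] ℓ²ℤ) : Prop :=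
  ∀ u : ℓ²ℤ, ∀ n : ℤ,
    L u (2 * n - 1) = -α (2 * n) * u (2 * n - 1) + (rho α (2 * n) : ℂ) * u (2 * n) ∧
    L u (2 * n) = (rho α (2 * n) : ℂ) * u (2 * n - 1) + conj (α (2 * n)) * u (2 * n)

/-- `M = ⊕_{n} Θ_{2n+1}(α_{2n+1})`. -/
def IsMOp (α : ℤ → ℂ) (M : ℓ²ℤ →L[ℂ] ℓ²ℤ) : Prop :=
  ∀ u : ℓ²ℤ, ∀ n : ℤ,
    M u (2 * n) = -α (2 * n + 1) * u (2 * n) + (rho α (2 * n + 1) : ℂ) * u (2 * n + 1) ∧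
    M u (2 * n + 1) = (rho α (2 * n + 1) : ℂ) * u (2 * n) + conj (α (2 * n + 1)) * u (2 * n + 1)

/-- `χ n` is multiplication by the characteristic function of `[n, ∞)`. -/
def IsChiPlus (χ : ℤ → (ℓ²ℤ →L[ℂ] ℓ²ℤ)) : Prop :=
  ∀ n : ℤ, ∀ u : ℓ²ℤ, ∀ m : ℤ, χ n u m = if n ≤ m then u m else 0

/-- `χ n` is multiplication by the characteristic function of `(-∞, n]`. -/
def IsChiMinus (χ : ℤ → (ℓ²ℤ →L[ℂ] ℓ²ℤ)) : Prop :=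
  ∀ n : ℤ, ∀ u : ℓ²ℤ, ∀ m : ℤ, χ n u m = if m ≤ n then u m else 0

/-!
Both `ℒ` and `ℳ` are block diagonal with `2 × 2` blocks, so row `m` of `𝒞 = ℒℳ` has its entries
in columns `m - 2, …, m + 1` (`m` even) or `m - 1, …, m + 2` (`m` odd). Row `m` of `[𝒞, χ_n^+]`
is `∑ₖ 𝒞ₘₖ (1[n ≤ k] - 1[n ≤ m]) φₖ`, so it vanishes unless this band of columns straddles `n`;
by parity that leaves the rows `n - 1, n` (`n` even) or `n - 2, …, n + 1` (`n` odd), and the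
surviving entries are the four stated rank-one terms.
-/

lemma delta_apply (k m : ℤ) : (delta k : ℤ → ℂ) m = if m = k then 1 else 0 := by
  simp [delta, lp.single_apply, Pi.single_apply]

lemma inner_delta_left (k : ℤ) (φ : ℓ²ℤ) : ⟪delta k, φ⟫ = φ k := by
  simp [delta, lp.inner_single_left, RCLike.inner_apply]

lemma commutator_chiPlus_apply {χp : ℤ → (ℓ²ℤ →L[ℂ] ℓ²ℤ)} (hχp : IsChiPlus χp)
    (T : ℓ²ℤ →L[ℂ] ℓ²ℤ) (n : ℤ) (φ : ℓ²ℤ) (m : ℤ) :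
    ((T ∘L χp n - χp n ∘L T) φ) m = T (χp n φ) m - if n ≤ m then T φ m else 0 := by
  rw [← hχp n (T φ) m]
  rfl

lemma exists_sum_four_rankOne (c a₁ a₂ a₃ a₄ : ℂ) (x₁ x₂ x₃ x₄ y₁ y₂ y₃ y₄ : ℓ²ℤ) :
    ∃ v w : Fin 4 → ℓ²ℤ, ∀ φ : ℓ²ℤ,
      c • ((a₁ * ⟪x₁, φ⟫) • y₁ + (a₂ * ⟪x₂, φ⟫) • y₂ + (a₃ * ⟪x₃, φ⟫) • y₃
        - (a₄ * ⟪x₄, φ⟫) • y₄) = ∑ i : Fin 4, ⟪w i, φ⟫ • v i := by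
  refine ⟨![(c * a₁) • y₁, (c * a₂) • y₂, (c * a₃) • y₃, (-(c * a₄)) • y₄],
    ![x₁, x₂, x₃, x₄], fun φ => ?_⟩
  simp only [Fin.sum_univ_four, Matrix.cons_val_zero, Matrix.cons_val_one, Matrix.head_cons,
    Matrix.cons_val_two, Matrix.tail_cons, Matrix.cons_val_three]
  module

section CMV

variable {α : ℤ → ℂ} {L M : ℓ²ℤ →L[ℂ] ℓ²ℤ} {χp : ℤ → (ℓ²ℤ →L[ℂ] ℓ²ℤ)}

lemma cmv_apply_of_even (hL : IsLOp α L) (hM : IsMOp α M) (u : ℓ²ℤ) {m : ℤ} (hm : Even m) :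
    L (M u) m =
      (rho α m : ℂ) * ((rho α (m - 1) : ℂ) * u (m - 2) + conj (α (m - 1)) * u (m - 1))
      + conj (α m) * (-α (m + 1) * u m + (rho α (m + 1) : ℂ) * u (m + 1)) := by
  obtain ⟨j, hj⟩ := hm
  have hLj := (hL (M u) j).2
  have hMj := (hM u (j - 1)).2
  have hMj' := (hM u j).1
  rw [show 2 * j - 1 = m - 1 by omega, show 2 * j = m by omega] at hLj
  rw [show 2 * (j - 1) + 1 = m - 1 by omega, show 2 * (j - 1) = m - 2 by omega] at hMj
  rw [show 2 * j + 1 = m + 1 by omega, show 2 * j = m by omega] at hMj'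
  rw [hLj, hMj, hMj']

lemma cmv_apply_of_odd (hL : IsLOp α L) (hM : IsMOp α M) (u : ℓ²ℤ) {m : ℤ} (hm : Odd m) :
    L (M u) m =
      -α (m + 1) * ((rho α m : ℂ) * u (m - 1) + conj (α m) * u m)
      + (rho α (m + 1) : ℂ) * (-α (m + 2) * u (m + 1) + (rho α (m + 2) : ℂ) * u (m + 2)) := by
  obtain ⟨j, hj⟩ := hm
  have hLj := (hL (M u) (j + 1)).1
  have hMj := (hM u j).2
  have hMj' := (hM u (j + 1)).1
  rw [show 2 * (j + 1) - 1 = m by omega, show 2 * (j + 1) = m + 1 by omega] at hLj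
  rw [show 2 * j + 1 = m by omega, show 2 * j = m - 1 by omega] at hMj
  rw [show 2 * (j + 1) + 1 = m + 2 by omega, show 2 * (j + 1) = m + 1 by omega] at hMj'
  rw [hLj, hMj, hMj']

variable (hL : IsLOp α L) (hM : IsMOp α M) (hχp : IsChiPlus χp)
include hL hM hχp

lemma cmv_commutator_chiPlus_of_even {n : ℤ} (hn : Even n) (φ : ℓ²ℤ) :
    ((L ∘L M) ∘L χp n - χp n ∘L (L ∘L M)) φ =
      -((rho α n : ℂ) • (
        ((rho α (n - 1) : ℂ) * ⟪delta (n - 2), φ⟫) • delta n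
        + (conj (α (n - 1)) * ⟪delta (n - 1), φ⟫) • delta n
        + (α (n + 1) * ⟪delta n, φ⟫) • delta (n - 1)
        - ((rho α (n + 1) : ℂ) * ⟪delta (n + 1), φ⟫) • delta (n - 1))) := by
  obtain ⟨k, hk⟩ := hn
  ext m
  rw [commutator_chiPlus_apply hχp, ContinuousLinearMap.comp_apply, ContinuousLinearMap.comp_apply]
  simp only [lp.coeFn_neg, lp.coeFn_smul, lp.coeFn_add, lp.coeFn_sub, Pi.neg_apply,
    Pi.smul_apply, Pi.add_apply, Pi.sub_apply, inner_delta_left, delta_apply, smul_eq_mul]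
  rcases Int.even_or_odd m with hm | hm
  · rw [cmv_apply_of_even hL hM _ hm, cmv_apply_of_even hL hM _ hm, hχp n φ (m - 2),
      hχp n φ (m - 1), hχp n φ m, hχp n φ (m + 1)]
    obtain ⟨j, hj⟩ := hm
    -- `ring` cannot use `m = n`, so the rows carrying the rank-one terms are substituted first.
    rcases eq_or_ne m n with rfl | hne
    · split_ifs <;> first | omega | ring
    split_ifs <;> first | omega | ring
  · rw [cmv_apply_of_odd hL hM _ hm, cmv_apply_of_odd hL hM _ hm, hχp n φ (m - 1), hχp n φ m,
      hχp n φ (m + 1), hχp n φ (m + 2)]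
    obtain ⟨j, hj⟩ := hm
    rcases eq_or_ne m (n - 1) with rfl | hne
    · simp only [sub_add_cancel, show n - 1 + 2 = n + 1 by ring]
      split_ifs <;> first | omega | ring
    split_ifs <;> first | omega | ring

lemma cmv_commutator_chiPlus_of_odd {n : ℤ} (hn : Odd n) (φ : ℓ²ℤ) :
    ((L ∘L M) ∘L χp n - χp n ∘L (L ∘L M)) φ =
      (rho α n : ℂ) • (
        ((rho α (n - 1) : ℂ) * ⟪delta n, φ⟫) • delta (n - 2)
        + (conj (α (n - 1)) * ⟪delta n, φ⟫) • delta (n - 1)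
        + (α (n + 1) * ⟪delta (n - 1), φ⟫) • delta n
        - ((rho α (n + 1) : ℂ) * ⟪delta (n - 1), φ⟫) • delta (n + 1)) := by
  obtain ⟨k, hk⟩ := hn
  ext m
  rw [commutator_chiPlus_apply hχp, ContinuousLinearMap.comp_apply, ContinuousLinearMap.comp_apply]
  simp only [lp.coeFn_smul, lp.coeFn_add, lp.coeFn_sub, Pi.smul_apply, Pi.add_apply,
    Pi.sub_apply, inner_delta_left, delta_apply, smul_eq_mul]
  rcases Int.even_or_odd m with hm | hm
  · rw [cmv_apply_of_even hL hM _ hm, cmv_apply_of_even hL hM _ hm, hχp n φ (m - 2),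
      hχp n φ (m - 1), hχp n φ m, hχp n φ (m + 1)]
    obtain ⟨j, hj⟩ := hm
    rcases eq_or_ne m (n - 1) with rfl | hne
    · simp only [sub_add_cancel]
      split_ifs <;> first | omega | ring
    rcases eq_or_ne m (n + 1) with rfl | hne'
    · simp only [add_sub_cancel_right, show n + 1 - 2 = n - 1 by ring]
      split_ifs <;> first | omega | ring
    split_ifs <;> first | omega | ring
  · rw [cmv_apply_of_odd hL hM _ hm, cmv_apply_of_odd hL hM _ hm, hχp n φ (m - 1), hχp n φ m,
      hχp n φ (m + 1), hχp n φ (m + 2)]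
    obtain ⟨j, hj⟩ := hm
    rcases eq_or_ne m (n - 2) with rfl | hne
    · simp only [sub_add_cancel, show n - 2 + 1 = n - 1 by ring]
      split_ifs <;> first | omega | ring
    rcases eq_or_ne m n with rfl | hne'
    · split_ifs <;> first | omega | ring
    split_ifs <;> first | omega | ring

end CMV

theorem stmt17_general
    (α : ℤ → ℂ)
    (L M : ℓ²ℤ →L[ℂ] ℓ²ℤ) (hL : IsLOp α L) (hM : IsMOp α M)
    (χp : ℤ → (ℓ²ℤ →L[ℂ] ℓ²ℤ)) (hχp : IsChiPlus χp) (n : ℤ) :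
    -- `n` even
    (Even n → ∀ φ : ℓ²ℤ,
      ((L ∘L M) ∘L χp n - χp n ∘L (L ∘L M)) φ =
        -((rho α n : ℂ) • (
          ((rho α (n - 1) : ℂ) * ⟪delta (n - 2), φ⟫) • delta n
          + (conj (α (n - 1)) * ⟪delta (n - 1), φ⟫) • delta n
          + (α (n + 1) * ⟪delta n, φ⟫) • delta (n - 1)
          - ((rho α (n + 1) : ℂ) * ⟪delta (n + 1), φ⟫) • delta (n - 1)))) ∧
    -- `n` odd
    (Odd n → ∀ φ : ℓ²ℤ,
      ((L ∘L M) ∘L χp n - χp n ∘L (L ∘L M)) φ =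
        (rho α n : ℂ) • (
          ((rho α (n - 1) : ℂ) * ⟪delta n, φ⟫) • delta (n - 2)
          + (conj (α (n - 1)) * ⟪delta n, φ⟫) • delta (n - 1)
          + (α (n + 1) * ⟪delta (n - 1), φ⟫) • delta n
          - ((rho α (n + 1) : ℂ) * ⟪delta (n - 1), φ⟫) • delta (n + 1))) ∧
    -- in particular, the commutator has rank at most 4
    (∃ v w : Fin 4 → ℓ²ℤ, ∀ φ : ℓ²ℤ,
      ((L ∘L M) ∘L χp n - χp n ∘L (L ∘L M)) φ = ∑ i : Fin 4, ⟪w i, φ⟫ • v i) := by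
  have heven := cmv_commutator_chiPlus_of_even (n := n) hL hM hχp
  have hodd := cmv_commutator_chiPlus_of_odd (n := n) hL hM hχp
  refine ⟨heven, hodd, ?_⟩
  rcases Int.even_or_odd n with hn | hn
  · obtain ⟨v, w, hvw⟩ := exists_sum_four_rankOne (-(rho α n : ℂ)) (rho α (n - 1))
      (conj (α (n - 1))) (α (n + 1)) (rho α (n + 1))
      (delta (n - 2)) (delta (n - 1)) (delta n) (delta (n + 1))
      (delta n) (delta n) (delta (n - 1)) (delta (n - 1))
    exact ⟨v, w, fun φ => by rw [heven hn φ, ← neg_smul, hvw]⟩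
  · obtain ⟨v, w, hvw⟩ := exists_sum_four_rankOne (rho α n : ℂ) (rho α (n - 1))
      (conj (α (n - 1))) (α (n + 1)) (rho α (n + 1))
      (delta n) (delta n) (delta (n - 1)) (delta (n - 1))
      (delta (n - 2)) (delta (n - 1)) (delta n) (delta (n + 1))
    exact ⟨v, w, fun φ => by rw [hodd hn φ, hvw]⟩

/-- The commutator `[𝒞, χ_n^+]` of the CMV matrix with the half-line projection is the
explicit rank-(at most)-four operator of the paper. -/
theorem stmt17
    (α : ℤ → ℂ) (hα : ∀ n, ‖α n‖ < 1)
    (L M : ℓ²ℤ →L[ℂ] ℓ²ℤ) (hL : IsLOp α L) (hM : IsMOp α M)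
    (χp : ℤ → (ℓ²ℤ →L[ℂ] ℓ²ℤ)) (hχp : IsChiPlus χp) (n : ℤ) :
    -- `n` even
    (Even n → ∀ φ : ℓ²ℤ,
      ((L ∘L M) ∘L χp n - χp n ∘L (L ∘L M)) φ =
        -((rho α n : ℂ) • (
          ((rho α (n - 1) : ℂ) * ⟪delta (n - 2), φ⟫) • delta n
          + (conj (α (n - 1)) * ⟪delta (n - 1), φ⟫) • delta n
          + (α (n + 1) * ⟪delta n, φ⟫) • delta (n - 1)
          - ((rho α (n + 1) : ℂ) * ⟪delta (n + 1), φ⟫) • delta (n - 1)))) ∧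
    -- `n` odd
    (Odd n → ∀ φ : ℓ²ℤ,
      ((L ∘L M) ∘L χp n - χp n ∘L (L ∘L M)) φ =
        (rho α n : ℂ) • (
          ((rho α (n - 1) : ℂ) * ⟪delta n, φ⟫) • delta (n - 2)
          + (conj (α (n - 1)) * ⟪delta n, φ⟫) • delta (n - 1)
          + (α (n + 1) * ⟪delta (n - 1), φ⟫) • delta n
          - ((rho α (n + 1) : ℂ) * ⟪delta (n - 1), φ⟫) • delta (n + 1))) ∧
    -- in particular, the commutator has rank at most 4
    (∃ v w : Fin 4 → ℓ²ℤ, ∀ φ : ℓ²ℤ,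
      ((L ∘L M) ∘L χp n - χp n ∘L (L ∘L M)) φ = ∑ i : Fin 4, ⟪w i, φ⟫ • v i) :=
  stmt17_general α L M hL hM χp hχp n
end
end
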